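/- arXiv:2004.04589 — 3 statements merged into one kernel-verified Lean document; each statement's English description precedes it below -/
import Mathlib

section
/- (Hardy inequality with degenerate weight) Let I = (0,1), γ > 1, ρ̄(x) = ((γ-1)/γ · (1-x))^(1/(γ-1)), and let β > -(γ-1) be a real number. Then there exists a constant C₁ depending only on γ and β such that for all w ∈ H¹_loc(I) with ∫_I ρ̄^(β+2(γ-1))·(w² + w_x²) dx < ∞, one has ∫_I ρ̄^β w² dx ≤ C₁ ∫_I ρ̄^(β+2(γ-1))·(w² + w_x²) dx. -/
/-!
With `c = (γ - 1) / γ` and `a = β / (γ - 1) > -1` one has `ρ^β = c^a (1 - x)^a` and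
`ρ^(β + 2(γ - 1)) = c^(a + 2) (1 - x)^(a + 2)`, so it suffices to bound `∫ (1 - x)^a w²` by
`∫ (1 - x)^(a + 2) (w² + w'²)`. On `(0, x₀]` with `x₀ ≤ 1/2` the two weights are comparable.
On `[x₀, y]` with `y < 1`, integrating the derivative of `(1 - x)^(a + 1) w²`, dropping the
nonnegative boundary term at `y` and absorbing the cross term `2 (1 - x)^(a + 1) w w'` by AM-GM
gives the one-dimensional Hardy inequality
`∫ (1 - x)^a w² ≤ 2/(a + 1) (1 - x₀)^(a + 1) w(x₀)² + 4/(a + 1)² ∫ (1 - x)^(a + 2) w'²`,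
uniformly in `y`; letting `y → 1` also shows that the left side is finite. Choosing `x₀ ∈ (0, 1/2)`
where `(1 - x)^(a + 2) w²` is at most its mean controls the point value `w(x₀)²`.
-/

open Real MeasureTheory Set Filter Topology

lemma abs_rpow_add_one_mul_two_mul_le {t a s : ℝ} (ht : 0 < t) (hs : 0 < s) (u v : ℝ) :
    |t ^ (a + 1) * (2 * u * v)| ≤ s * (t ^ a * u ^ 2) + s⁻¹ * (t ^ (a + 2) * v ^ 2) := by
  have amgm := two_mul_le_add_mul_sq (a := |u|) (b := |t * v|) hs
  rw [sq_abs, sq_abs] at amgm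
  have hta : 0 ≤ t ^ a := rpow_nonneg ht.le a
  calc |t ^ (a + 1) * (2 * u * v)| = t ^ a * (2 * |u| * |t * v|) := by
        simp only [rpow_add ht, rpow_one, abs_mul, abs_two, abs_of_nonneg hta, abs_of_pos ht]
        ring
    _ ≤ t ^ a * (s * u ^ 2 + s⁻¹ * (t * v) ^ 2) := by gcongr
    _ = s * (t ^ a * u ^ 2) + s⁻¹ * (t ^ (a + 2) * v ^ 2) := by
        rw [rpow_add ht, rpow_two]
        ring

lemma hasDerivAt_one_sub_rpow_add_one_mul_sq {p x w' : ℝ} {w : ℝ → ℝ} (hx : x < 1)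
    (hw : HasDerivAt w w' x) :
    HasDerivAt (fun y => (1 - y) ^ (p + 1) * w y ^ 2)
      (-((p + 1) * ((1 - x) ^ p * w x ^ 2)) + (1 - x) ^ (p + 1) * (2 * w x * w')) x := by
  have hbase : HasDerivAt (fun y : ℝ => (1 - y) ^ (p + 1)) (-((p + 1) * (1 - x) ^ p)) x := by
    have h := ((hasDerivAt_id x).const_sub 1).rpow_const (p := p + 1)
      (Or.inl (sub_ne_zero.2 hx.ne'))
    refine h.congr_deriv ?_
    simp only [add_sub_cancel_right, id]
    ring
  refine (hbase.mul (hw.fun_pow 2)).congr_deriv ?_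
  norm_num
  ring

lemma integrableOn_Ioo_and_setIntegral_le_of_forall_Ioc {f : ℝ → ℝ} {a b K : ℝ}
    (hab : a < b) (hf : ∀ x ∈ Ioo a b, 0 ≤ f x) (hfi : ∀ y ∈ Ioo a b, IntegrableOn f (Ioc a y))
    (hK : ∀ y ∈ Ioo a b, ∫ x in Ioc a y, f x ≤ K) :
    IntegrableOn f (Ioo a b) ∧ ∫ x in Ioo a b, f x ≤ K := by
  -- `AECover` asks for integrability on every member of the cover, so the right endpoints
  -- run through a sequence inside `(a, b)`.
  set y : ℕ → ℝ := fun n => b - (b - a) / (n + 2)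
  have hy : ∀ n, y n ∈ Ioo a b := fun n => by
    have hn : (1 : ℝ) < n + 2 := by linarith [n.cast_nonneg (α := ℝ)]
    constructor
    · linarith [div_lt_self (sub_pos.2 hab) hn]
    · linarith [div_pos (sub_pos.2 hab) (by linarith : (0 : ℝ) < n + 2)]
  have hy_lim : Tendsto y atTop (𝓝 b) := by
    have h := (tendsto_const_div_atTop_nhds_zero_nat (b - a)).comp (tendsto_add_atTop_nat 2)
    simpa [y, Function.comp_def] using (tendsto_const_nhds (x := b)).sub h
  have hcover : AECover (volume.restrict (Ioo a b)) atTop fun n => Ioc a (y n) :=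
    aecover_Ioo_of_Ioc tendsto_const_nhds hy_lim
  have hrestrict : ∀ n, (volume.restrict (Ioo a b)).restrict (Ioc a (y n)) =
      volume.restrict (Ioc a (y n)) := fun n => by
    rw [Measure.restrict_restrict measurableSet_Ioc,
      inter_eq_left.2 (Ioc_subset_Ioo_right (hy n).2)]
  have hint : IntegrableOn f (Ioo a b) :=
    hcover.integrable_of_integral_bounded_of_nonneg_ae K
      (fun n => by rw [IntegrableOn, hrestrict]; exact hfi _ (hy n))
      ((ae_restrict_iff' measurableSet_Ioo).2 (ae_of_all _ hf))
      (Eventually.of_forall fun n => by rw [hrestrict]; exact hK _ (hy n))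
  refine ⟨hint, le_of_tendsto (hcover.integral_tendsto_of_countably_generated hint) ?_⟩
  exact Eventually.of_forall fun n => by rw [hrestrict]; exact hK _ (hy n)

lemma setIntegral_one_sub_rpow_mul_sq_mono_set {a : ℝ} {u : ℝ → ℝ} {s t : Set ℝ}
    (ht : t ⊆ Iio 1) (htm : MeasurableSet t) (hst : s ⊆ t)
    (hu : IntegrableOn (fun x => (1 - x) ^ a * u x ^ 2) t) :
    ∫ x in s, (1 - x) ^ a * u x ^ 2 ≤ ∫ x in t, (1 - x) ^ a * u x ^ 2 := by
  refine setIntegral_mono_set hu (ae_restrict_of_forall_mem htm fun x hx => ?_) hst.eventuallyLE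
  exact mul_nonneg (rpow_nonneg (by linarith [show x < 1 from ht hx]) _) (sq_nonneg _)

lemma integrableOn_Ioc_one_sub_rpow_mul_sq {a x₀ y : ℝ} {w : ℝ → ℝ} (hy : y < 1)
    (hw : ContinuousOn w (Icc x₀ y)) :
    IntegrableOn (fun x => (1 - x) ^ a * w x ^ 2) (Ioc x₀ y) := by
  refine (ContinuousOn.integrableOn_Icc ?_).mono_set Ioc_subset_Icc_self
  refine ((continuousOn_const.sub continuousOn_id).rpow_const fun x hx => ?_).mul (hw.pow 2)
  exact Or.inl (sub_ne_zero.2 (hx.2.trans_lt hy).ne')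

lemma integrableOn_and_setIntegral_Ioc_cross_le {a x₀ y : ℝ} {w v : ℝ → ℝ} (ha : -1 < a)
    (hy : y < 1) (hw : ContinuousOn w (Icc x₀ y))
    (hv : AEStronglyMeasurable v (volume.restrict (Ioc x₀ y)))
    (hg : IntegrableOn (fun x => (1 - x) ^ (a + 2) * v x ^ 2) (Ioc x₀ y)) :
    IntegrableOn (fun x => (1 - x) ^ (a + 1) * (2 * w x * v x)) (Ioc x₀ y) ∧
    ∫ x in Ioc x₀ y, (1 - x) ^ (a + 1) * (2 * w x * v x) ≤
      (a + 1) / 2 * (∫ x in Ioc x₀ y, (1 - x) ^ a * w x ^ 2) +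
        2 / (a + 1) * ∫ x in Ioc x₀ y, (1 - x) ^ (a + 2) * v x ^ 2 := by
  have hpos : ∀ x ∈ Icc x₀ y, 0 < 1 - x := fun x hx => by linarith [hx.2]
  have hf := integrableOn_Ioc_one_sub_rpow_mul_sq (a := a) hy hw
  have hdom := (hf.const_mul ((a + 1) / 2)).add (hg.const_mul (2 / (a + 1)))
  have hle : ∀ x ∈ Ioc x₀ y, |(1 - x) ^ (a + 1) * (2 * w x * v x)| ≤
      (a + 1) / 2 * ((1 - x) ^ a * w x ^ 2) + 2 / (a + 1) * ((1 - x) ^ (a + 2) * v x ^ 2) :=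
    fun x hx => by
      simpa only [inv_div] using abs_rpow_add_one_mul_two_mul_le
        (hpos x (Ioc_subset_Icc_self hx)) (by linarith : 0 < (a + 1) / 2) _ _
  have hcross : IntegrableOn (fun x => (1 - x) ^ (a + 1) * (2 * w x * v x)) (Ioc x₀ y) := by
    refine hdom.mono' ?_ (ae_restrict_of_forall_mem measurableSet_Ioc hle)
    have hcont : ContinuousOn (fun x => (1 - x) ^ (a + 1) * (2 * w x)) (Icc x₀ y) :=
      ((continuousOn_const.sub continuousOn_id).rpow_const
        fun x hx => Or.inl (hpos x hx).ne').mul (continuousOn_const.mul hw)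
    refine (((hcont.mono Ioc_subset_Icc_self).aestronglyMeasurable measurableSet_Ioc).mul
      hv).congr (ae_of_all _ fun x => ?_)
    simp only [Pi.mul_apply]
    ring
  refine ⟨hcross, ?_⟩
  rw [← integral_const_mul, ← integral_const_mul,
    ← integral_add (hf.const_mul _) (hg.const_mul _)]
  exact setIntegral_mono_on hcross hdom measurableSet_Ioc
    fun x hx => (le_abs_self _).trans (hle x hx)

lemma hardy_one_sub_rpow_Ioc {a x₀ y : ℝ} {w : ℝ → ℝ} (ha : -1 < a) (hxy : x₀ ≤ y)
    (hy : y < 1) (hw : ∀ x ∈ Icc x₀ y, DifferentiableAt ℝ w x)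
    (hg : IntegrableOn (fun x => (1 - x) ^ (a + 2) * deriv w x ^ 2) (Ioc x₀ y)) :
    ∫ x in Ioc x₀ y, (1 - x) ^ a * w x ^ 2 ≤
      2 / (a + 1) * ((1 - x₀) ^ (a + 1) * w x₀ ^ 2) +
        4 / (a + 1) ^ 2 * ∫ x in Ioc x₀ y, (1 - x) ^ (a + 2) * deriv w x ^ 2 := by
  have hwc : ContinuousOn w (Icc x₀ y) := fun x hx => (hw x hx).continuousAt.continuousWithinAt
  have hf := integrableOn_Ioc_one_sub_rpow_mul_sq (a := a) hy hwc
  obtain ⟨hcross, hcross_le⟩ := integrableOn_and_setIntegral_Ioc_cross_le ha hy hwc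
    (measurable_deriv w).aestronglyMeasurable hg
  have hneg : IntegrableOn (fun x => -((a + 1) * ((1 - x) ^ a * w x ^ 2))) (Ioc x₀ y) :=
    (hf.const_mul _).neg
  have hftc : ∫ x in Ioc x₀ y, (-((a + 1) * ((1 - x) ^ a * w x ^ 2)) +
      (1 - x) ^ (a + 1) * (2 * w x * deriv w x)) =
      (1 - y) ^ (a + 1) * w y ^ 2 - (1 - x₀) ^ (a + 1) * w x₀ ^ 2 := by
    rw [← intervalIntegral.integral_of_le hxy]
    refine intervalIntegral.integral_eq_sub_of_hasDerivAt
      (f := fun z => (1 - z) ^ (a + 1) * w z ^ 2) (fun x hx => ?_)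
      ((intervalIntegrable_iff_integrableOn_Ioc_of_le hxy).2 (hneg.add hcross))
    rw [uIcc_of_le hxy] at hx
    exact hasDerivAt_one_sub_rpow_add_one_mul_sq (hx.2.trans_lt hy) (hw x hx).hasDerivAt
  rw [integral_add hneg hcross, integral_neg, integral_const_mul] at hftc
  have hFy : 0 ≤ (1 - y) ^ (a + 1) * w y ^ 2 :=
    mul_nonneg (rpow_nonneg (by linarith) _) (sq_nonneg _)
  have ha1 : 0 < a + 1 := by linarith
  calc ∫ x in Ioc x₀ y, (1 - x) ^ a * w x ^ 2
      = 2 / (a + 1) * ((a + 1) / 2 * ∫ x in Ioc x₀ y, (1 - x) ^ a * w x ^ 2) := by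
        field_simp
    _ ≤ 2 / (a + 1) * ((1 - x₀) ^ (a + 1) * w x₀ ^ 2 +
          2 / (a + 1) * ∫ x in Ioc x₀ y, (1 - x) ^ (a + 2) * deriv w x ^ 2) := by
        gcongr
        linarith
    _ = _ := by
        field_simp
        ring

theorem hardy_one_sub_rpow_Ioo_one {a x₀ : ℝ} {w : ℝ → ℝ} (ha : -1 < a) (hx₀ : x₀ < 1)
    (hw : ∀ x ∈ Ico x₀ 1, DifferentiableAt ℝ w x)
    (hg : IntegrableOn (fun x => (1 - x) ^ (a + 2) * deriv w x ^ 2) (Ioo x₀ 1)) :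
    IntegrableOn (fun x => (1 - x) ^ a * w x ^ 2) (Ioo x₀ 1) ∧
    ∫ x in Ioo x₀ 1, (1 - x) ^ a * w x ^ 2 ≤
      2 / (a + 1) * ((1 - x₀) ^ (a + 1) * w x₀ ^ 2) +
        4 / (a + 1) ^ 2 * ∫ x in Ioo x₀ 1, (1 - x) ^ (a + 2) * deriv w x ^ 2 := by
  have hIcc : ∀ y ∈ Ioo x₀ 1, Icc x₀ y ⊆ Ico x₀ 1 := fun y hy => Icc_subset_Ico_right hy.2
  have hIoc : ∀ y ∈ Ioo x₀ 1, Ioc x₀ y ⊆ Ioo x₀ 1 := fun y hy => Ioc_subset_Ioo_right hy.2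
  refine integrableOn_Ioo_and_setIntegral_le_of_forall_Ioc hx₀
    (fun x hx => mul_nonneg (rpow_nonneg (by linarith [hx.2]) _) (sq_nonneg _))
    (fun y hy => integrableOn_Ioc_one_sub_rpow_mul_sq hy.2
      fun x hx => (hw x (hIcc y hy hx)).continuousAt.continuousWithinAt)
    (fun y hy => ?_)
  refine (hardy_one_sub_rpow_Ioc ha hy.1.le hy.2 (fun x hx => hw x (hIcc y hy hx))
    (hg.mono_set (hIoc y hy))).trans ?_
  gcongr _ + _ * ?_
  exact setIntegral_one_sub_rpow_mul_sq_mono_set (fun x hx => hx.2) measurableSet_Ioo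
    (hIoc y hy) hg

lemma integrableOn_and_setIntegral_le_of_subset_Iic_half {a : ℝ} {w : ℝ → ℝ} {s : Set ℝ}
    (hs : s ⊆ Iic (1 / 2)) (hsm : MeasurableSet s)
    (hw : AEStronglyMeasurable w (volume.restrict s))
    (hg : IntegrableOn (fun x => (1 - x) ^ (a + 2) * w x ^ 2) s) :
    IntegrableOn (fun x => (1 - x) ^ a * w x ^ 2) s ∧
    ∫ x in s, (1 - x) ^ a * w x ^ 2 ≤ 4 * ∫ x in s, (1 - x) ^ (a + 2) * w x ^ 2 := by
  have hpos : ∀ x ∈ s, 0 < 1 - x := fun x hx => by linarith [show x ≤ 1 / 2 from hs hx]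
  have hle : ∀ x ∈ s, (1 - x) ^ a * w x ^ 2 ≤ 4 * ((1 - x) ^ (a + 2) * w x ^ 2) := fun x hx => by
    have hsq : 1 ≤ 4 * (1 - x) ^ 2 := by nlinarith [show x ≤ 1 / 2 from hs hx]
    rw [rpow_add (hpos x hx), rpow_two]
    nlinarith [mul_nonneg (rpow_nonneg (hpos x hx).le a) (sq_nonneg (w x))]
  have hf : IntegrableOn (fun x => (1 - x) ^ a * w x ^ 2) s := by
    refine (hg.const_mul 4).mono' ?_ (ae_restrict_of_forall_mem hsm fun x hx => ?_)
    · exact (by fun_prop : Measurable fun x : ℝ => (1 - x) ^ a).aestronglyMeasurable.mul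
        (hw.pow 2)
    · rw [norm_of_nonneg (mul_nonneg (rpow_nonneg (hpos x hx).le _) (sq_nonneg _))]
      exact hle x hx
  refine ⟨hf, ?_⟩
  rw [← integral_const_mul]
  exact setIntegral_mono_on hf (hg.const_mul 4) hsm hle

lemma exists_one_sub_rpow_add_one_mul_sq_le {a : ℝ} {w : ℝ → ℝ}
    (h : IntegrableOn (fun x => (1 - x) ^ (a + 2) * w x ^ 2) (Ioo 0 (1 / 2))) :
    ∃ x₀ ∈ Ioo (0 : ℝ) (1 / 2),
      (1 - x₀) ^ (a + 1) * w x₀ ^ 2 ≤ 4 * ∫ x in Ioo 0 (1 / 2), (1 - x) ^ (a + 2) * w x ^ 2 := by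
  obtain ⟨x₀, hx₀, hle⟩ := exists_le_setAverage (by simp) (by simp) h
  rw [setAverage_eq, volume_real_Ioo_of_le (by norm_num), smul_eq_mul] at hle
  refine ⟨x₀, hx₀, ?_⟩
  have hpos : 0 < 1 - x₀ := by linarith [hx₀.2]
  have hsplit : (1 - x₀) ^ (a + 2) = (1 - x₀) ^ (a + 1) * (1 - x₀) := by
    rw [show a + 2 = a + 1 + 1 by ring, rpow_add hpos, rpow_one]
  rw [hsplit] at hle
  nlinarith [mul_nonneg (rpow_nonneg hpos.le (a + 1)) (sq_nonneg (w x₀)), hx₀.2]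

theorem hardy_one_sub_rpow_Ioo_zero_one {a : ℝ} {w : ℝ → ℝ} (ha : -1 < a)
    (hw : DifferentiableOn ℝ w (Ioo 0 1))
    (hg₀ : IntegrableOn (fun x => (1 - x) ^ (a + 2) * w x ^ 2) (Ioo 0 1))
    (hg₁ : IntegrableOn (fun x => (1 - x) ^ (a + 2) * deriv w x ^ 2) (Ioo 0 1)) :
    IntegrableOn (fun x => (1 - x) ^ a * w x ^ 2) (Ioo 0 1) ∧
    ∫ x in Ioo 0 1, (1 - x) ^ a * w x ^ 2 ≤
      (4 + 8 / (a + 1)) * (∫ x in Ioo 0 1, (1 - x) ^ (a + 2) * w x ^ 2) +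
        4 / (a + 1) ^ 2 * ∫ x in Ioo 0 1, (1 - x) ^ (a + 2) * deriv w x ^ 2 := by
  have ha1 : 0 < a + 1 := by linarith
  have hI : Ioo (0 : ℝ) 1 ⊆ Iio 1 := fun x hx => hx.2
  obtain ⟨x₀, hx₀, hwx₀⟩ := exists_one_sub_rpow_add_one_mul_sq_le
    (hg₀.mono_set (Ioo_subset_Ioo_right (by norm_num)))
  have hx₀1 : x₀ < 1 := by linarith [hx₀.2]
  have hleft : Ioc 0 x₀ ⊆ Ioo 0 1 := Ioc_subset_Ioo_right hx₀1
  have hright : Ioo x₀ 1 ⊆ Ioo 0 1 := Ioo_subset_Ioo_left hx₀.1.le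
  obtain ⟨hf₀, hle₀⟩ := integrableOn_and_setIntegral_le_of_subset_Iic_half
    (fun x hx => hx.2.trans hx₀.2.le) measurableSet_Ioc
    ((hw.continuousOn.mono hleft).aestronglyMeasurable measurableSet_Ioc) (hg₀.mono_set hleft)
  obtain ⟨hf₁, hle₁⟩ := hardy_one_sub_rpow_Ioo_one ha hx₀1
    (fun x hx => hw.differentiableAt (Ioo_mem_nhds (hx₀.1.trans_le hx.1) hx.2))
    (hg₁.mono_set hright)
  have hunion := Ioc_union_Ioo_eq_Ioo hx₀.1.le hx₀1
  refine ⟨hunion ▸ hf₀.union hf₁, ?_⟩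
  rw [← hunion, setIntegral_union ((Ioc_disjoint_Ioi le_rfl).mono_right Ioo_subset_Ioi_self)
    measurableSet_Ioo hf₀ hf₁, hunion]
  calc (∫ x in Ioc 0 x₀, (1 - x) ^ a * w x ^ 2) + ∫ x in Ioo x₀ 1, (1 - x) ^ a * w x ^ 2
      ≤ 4 * (∫ x in Ioc 0 x₀, (1 - x) ^ (a + 2) * w x ^ 2) +
          (2 / (a + 1) * (4 * ∫ x in Ioo 0 (1 / 2), (1 - x) ^ (a + 2) * w x ^ 2) +
            4 / (a + 1) ^ 2 * ∫ x in Ioo x₀ 1, (1 - x) ^ (a + 2) * deriv w x ^ 2) := by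
        gcongr
        exact hle₁.trans
          (add_le_add_left (mul_le_mul_of_nonneg_left hwx₀ (div_pos two_pos ha1).le) _)
    _ ≤ 4 * (∫ x in Ioo 0 1, (1 - x) ^ (a + 2) * w x ^ 2) +
          (2 / (a + 1) * (4 * ∫ x in Ioo 0 1, (1 - x) ^ (a + 2) * w x ^ 2) +
            4 / (a + 1) ^ 2 * ∫ x in Ioo 0 1, (1 - x) ^ (a + 2) * deriv w x ^ 2) := by
        gcongr 4 * ?_ + (_ * (4 * ?_) + _ * ?_)
        · exact setIntegral_one_sub_rpow_mul_sq_mono_set hI measurableSet_Ioo hleft hg₀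
        · exact setIntegral_one_sub_rpow_mul_sq_mono_set hI measurableSet_Ioo
            (Ioo_subset_Ioo_right (by norm_num)) hg₀
        · exact setIntegral_one_sub_rpow_mul_sq_mono_set hI measurableSet_Ioo hright hg₁
    _ = _ := by ring

theorem hardy_one_sub_rpow {a : ℝ} {w : ℝ → ℝ} (ha : -1 < a)
    (hw : DifferentiableOn ℝ w (Ioo 0 1))
    (hJ : IntegrableOn (fun x => (1 - x) ^ (a + 2) * (w x ^ 2 + deriv w x ^ 2)) (Ioo 0 1)) :
    IntegrableOn (fun x => (1 - x) ^ a * w x ^ 2) (Ioo 0 1) ∧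
    ∫ x in Ioo 0 1, (1 - x) ^ a * w x ^ 2 ≤
      4 * ((a + 2) / (a + 1)) ^ 2 *
        ∫ x in Ioo 0 1, (1 - x) ^ (a + 2) * (w x ^ 2 + deriv w x ^ 2) := by
  have hweight : ∀ x ∈ Ioo (0 : ℝ) 1, 0 ≤ (1 - x) ^ (a + 2) := fun x hx =>
    rpow_nonneg (sub_nonneg.2 hx.2.le) _
  have hg₀ : IntegrableOn (fun x => (1 - x) ^ (a + 2) * w x ^ 2) (Ioo 0 1) := by
    refine hJ.mono'
      ((by fun_prop : Measurable fun x : ℝ => (1 - x) ^ (a + 2)).aestronglyMeasurable.mul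
        ((hw.continuousOn.aestronglyMeasurable measurableSet_Ioo).pow 2))
      (ae_restrict_of_forall_mem measurableSet_Ioo fun x hx => ?_)
    rw [norm_of_nonneg (mul_nonneg (hweight x hx) (sq_nonneg _))]
    nlinarith [mul_nonneg (hweight x hx) (sq_nonneg (deriv w x))]
  have hg₁ : IntegrableOn (fun x => (1 - x) ^ (a + 2) * deriv w x ^ 2) (Ioo 0 1) :=
    (hJ.sub hg₀).congr_fun (fun x _ => by simp only [Pi.sub_apply]; ring) measurableSet_Ioo
  obtain ⟨hf, hle⟩ := hardy_one_sub_rpow_Ioo_zero_one ha hw hg₀ hg₁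
  refine ⟨hf, hle.trans ?_⟩
  have hsplit : ∫ x in Ioo 0 1, (1 - x) ^ (a + 2) * (w x ^ 2 + deriv w x ^ 2) =
      (∫ x in Ioo 0 1, (1 - x) ^ (a + 2) * w x ^ 2) +
        ∫ x in Ioo 0 1, (1 - x) ^ (a + 2) * deriv w x ^ 2 := by
    rw [← integral_add hg₀ hg₁]
    simp only [mul_add]
  have hG₀ := setIntegral_nonneg (μ := volume) measurableSet_Ioo fun x hx =>
    mul_nonneg (hweight x hx) (sq_nonneg (w x))
  have hG₁ := setIntegral_nonneg (μ := volume) measurableSet_Ioo fun x hx =>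
    mul_nonneg (hweight x hx) (sq_nonneg (deriv w x))
  have ha1 : 0 < a + 1 := by linarith
  have hC : 4 * ((a + 2) / (a + 1)) ^ 2 = 4 + 8 / (a + 1) + 4 / (a + 1) ^ 2 := by
    field_simp
    ring
  rw [hsplit, hC]
  have h₀ : 0 ≤ 4 / (a + 1) ^ 2 := by positivity
  have h₁ : 0 ≤ 4 + 8 / (a + 1) := by positivity
  nlinarith [mul_nonneg h₀ hG₀, mul_nonneg h₁ hG₁]

lemma mul_one_sub_rpow_one_div_rpow {c k s x : ℝ} (hc : 0 ≤ c) (hx : x ≤ 1) :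
    ((c * (1 - x)) ^ (1 / k)) ^ s = c ^ (s / k) * (1 - x) ^ (s / k) := by
  rw [← rpow_mul (mul_nonneg hc (sub_nonneg.2 hx)), one_div_mul_eq_div,
    mul_rpow hc (sub_nonneg.2 hx)]

theorem hardy_inequality (γ β : ℝ) (hγ : 1 < γ) (hβ : -(γ - 1) < β)
    (ρ : ℝ → ℝ)
    (hρ : ∀ x, ρ x = ((γ - 1) / γ * (1 - x)) ^ (1 / (γ - 1))) :
    ∃ C₁ : ℝ, 0 < C₁ ∧
      ∀ w : ℝ → ℝ, DifferentiableOn ℝ w (Set.Ioo 0 1) →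
        IntegrableOn
          (fun x => ρ x ^ (β + 2 * (γ - 1)) * ((w x) ^ 2 + (deriv w x) ^ 2))
          (Set.Ioo 0 1) →
        ∫ x in Set.Ioo (0 : ℝ) 1, ρ x ^ β * (w x) ^ 2 ≤
          C₁ * ∫ x in Set.Ioo (0 : ℝ) 1,
            ρ x ^ (β + 2 * (γ - 1)) * ((w x) ^ 2 + (deriv w x) ^ 2) := by
  have hγ1 : 0 < γ - 1 := by linarith
  set c := (γ - 1) / γ
  have hc : 0 < c := div_pos hγ1 (by linarith)
  set a := β / (γ - 1)
  have ha : -1 < a := by rw [lt_div_iff₀ hγ1]; linarith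
  have hexp : (β + 2 * (γ - 1)) / (γ - 1) = a + 2 := by
    simp only [a]
    field_simp
  have hρs : ∀ s, ∀ x ∈ Ioo (0 : ℝ) 1,
      ρ x ^ s = c ^ (s / (γ - 1)) * (1 - x) ^ (s / (γ - 1)) :=
    fun s x hx => by rw [hρ]; exact mul_one_sub_rpow_one_div_rpow hc.le hx.2.le
  refine ⟨4 * ((a + 2) / (a + 1)) ^ 2 / c ^ 2, ?_, ?_⟩
  · exact div_pos (mul_pos four_pos (pow_pos (div_pos (by linarith) (by linarith)) 2))
      (pow_pos hc 2)
  intro w hw hInt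
  have hrhs : EqOn (fun x => ρ x ^ (β + 2 * (γ - 1)) * (w x ^ 2 + deriv w x ^ 2))
      (fun x => c ^ (a + 2) * ((1 - x) ^ (a + 2) * (w x ^ 2 + deriv w x ^ 2))) (Ioo 0 1) :=
    fun x hx => by simp only [hρs _ x hx, hexp, mul_assoc]
  have hlhs : EqOn (fun x => ρ x ^ β * w x ^ 2) (fun x => c ^ a * ((1 - x) ^ a * w x ^ 2))
      (Ioo 0 1) := fun x hx => by simp only [hρs _ x hx, mul_assoc, a]
  obtain ⟨-, hle⟩ := hardy_one_sub_rpow ha hw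
    ((integrable_const_mul_iff (rpow_pos_of_pos hc (a + 2)).ne'.isUnit _).1
      (hInt.congr_fun hrhs measurableSet_Ioo))
  rw [setIntegral_congr_fun measurableSet_Ioo hlhs,
    setIntegral_congr_fun measurableSet_Ioo hrhs, integral_const_mul, integral_const_mul,
    rpow_add hc, rpow_two]
  calc c ^ a * ∫ x in Ioo 0 1, (1 - x) ^ a * w x ^ 2
      ≤ c ^ a * (4 * ((a + 2) / (a + 1)) ^ 2 *
          ∫ x in Ioo 0 1, (1 - x) ^ (a + 2) * (w x ^ 2 + deriv w x ^ 2)) := by gcongr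
    _ = _ := by field_simp
end

section
/- (Refined Hardy inequality) Let I = (0,1), γ > 1, ρ̄(x) = ((γ-1)/γ · (1-x))^(1/(γ-1)), and β > -(γ-1). Then there exists a constant C₂ depending only on γ and β such that for any w ∈ H¹_loc(I) with w(0) = 0 and ∫_I ρ̄^(β+2(γ-1)) w_x² dx < ∞, one has ∫_I ρ̄^β w² dx ≤ C₂ ∫_I ρ̄^(β+2(γ-1)) w_x² dx. -/
/-!
With `c = (γ - 1) / γ` we have `ρ̄ ^ e = c ^ (e / (γ - 1)) * (1 - x) ^ (e / (γ - 1))`, so the claim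
is the weighted Hardy inequality `∫ (1 - x) ^ α w² ≤ 4 / (α + 1)² ∫ (1 - x) ^ (α + 2) w'²` for
`α = β / (γ - 1) > -1`. Put `p = (α + 1) / 2 > 0`. Since `w(0) = 0`, Cauchy–Schwarz against the
weight `(1 - s) ^ (p + 1)` gives `w(x)² ≤ p⁻¹ (1 - x) ^ (-p) ∫₀ˣ (1 - s) ^ (p + 1) w'(s)² ds`.
Multiplying by `(1 - x) ^ α` and exchanging the order of integration,
`∫ₛ¹ (1 - x) ^ (p - 1) dx = p⁻¹ (1 - s) ^ p` turns the weight into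
`(1 - s) ^ (2p + 1) = (1 - s) ^ (α + 2)` and the constant into `p⁻² = 4 / (α + 1)²`.
Working with lower Lebesgue integrals avoids any integrability bookkeeping until the end.
-/

open Real MeasureTheory Set
open scoped ENNReal

theorem sq_lintegral_enorm_le_lintegral_inv_mul_lintegral_mul_sq {X : Type*}
    [MeasurableSpace X] {μ : Measure X} {f g : X → ℝ} (hf : Measurable f) (hg : Measurable g)
    (hg_pos : ∀ᵐ x ∂μ, 0 < g x) :
    (∫⁻ x, ‖f x‖ₑ ∂μ) ^ 2 ≤
      (∫⁻ x, ENNReal.ofReal (g x)⁻¹ ∂μ) * ∫⁻ x, ENNReal.ofReal (g x * f x ^ 2) ∂μ := by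
  have h_split : ∀ᵐ x ∂μ, ‖f x‖ₑ =
      ENNReal.ofReal (g x)⁻¹ ^ (1 / 2 : ℝ) * ENNReal.ofReal (g x * f x ^ 2) ^ (1 / 2 : ℝ) := by
    filter_upwards [hg_pos] with x hx
    rw [← ENNReal.mul_rpow_of_nonneg _ _ (by norm_num), ← ENNReal.ofReal_mul (by positivity),
      inv_mul_cancel_left₀ hx.ne', ENNReal.ofReal_rpow_of_nonneg (sq_nonneg _) (by norm_num),
      ← Real.sqrt_eq_rpow, Real.sqrt_sq_eq_abs, enorm_eq_ofReal_abs]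
  have h_holder := ENNReal.lintegral_mul_norm_pow_le (μ := μ)
    (f := fun x => ENNReal.ofReal (g x)⁻¹) (g := fun x => ENNReal.ofReal (g x * f x ^ 2))
    (hg.inv.ennreal_ofReal.aemeasurable) ((hg.mul (hf.pow_const 2)).ennreal_ofReal.aemeasurable)
    (p := 1 / 2) (q := 1 / 2) (by norm_num) (by norm_num) (by norm_num)
  rw [lintegral_congr_ae h_split]
  calc _ ≤ ((∫⁻ x, ENNReal.ofReal (g x)⁻¹ ∂μ) ^ (1 / 2 : ℝ) *
        (∫⁻ x, ENNReal.ofReal (g x * f x ^ 2) ∂μ) ^ (1 / 2 : ℝ)) ^ 2 :=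
        pow_le_pow_left₀ zero_le h_holder 2
    _ = _ := by
      rw [mul_pow, ← ENNReal.rpow_natCast, ← ENNReal.rpow_natCast, ← ENNReal.rpow_mul,
        ← ENNReal.rpow_mul]
      norm_num only [ENNReal.rpow_one]

theorem enorm_sub_le_lintegral_enorm_deriv {f : ℝ → ℝ} {a b : ℝ} (hab : a ≤ b)
    (hf : ContinuousOn f (Icc a b)) (hf' : DifferentiableOn ℝ f (Ioo a b)) :
    ‖f b - f a‖ₑ ≤ ∫⁻ x in Ioo a b, ‖deriv f x‖ₑ := by
  by_cases h_top : ∫⁻ x in Ioo a b, ‖deriv f x‖ₑ = ∞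
  · simp [h_top]
  have h_int : IntervalIntegrable (deriv f) volume a b := by
    rw [intervalIntegrable_iff_integrableOn_Ioo_of_le hab]
    exact ⟨(measurable_deriv f).aestronglyMeasurable, Ne.lt_top h_top⟩
  rw [← intervalIntegral.integral_eq_sub_of_hasDerivAt_of_le hab hf
    (fun x hx => (hf'.differentiableAt (isOpen_Ioo.mem_nhds hx)).hasDerivAt) h_int,
    intervalIntegral.integral_of_le hab, ← restrict_Ioo_eq_restrict_Ioc]
  exact enorm_integral_le_lintegral_enorm _

theorem lintegral_Ioo_inv_rpow_sub_le {a b x p : ℝ} (hp : 0 < p) (hax : a ≤ x) (hxb : x < b) :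
    ∫⁻ s in Ioo a x, ENNReal.ofReal ((b - s) ^ (p + 1))⁻¹ ≤
      ENNReal.ofReal (p⁻¹ * (b - x) ^ (-p)) := by
  have h_cont : ContinuousOn (fun s => (b - s) ^ (-(p + 1))) (Icc a x) :=
    (continuousOn_const.sub continuousOn_id).rpow_const fun s hs =>
      Or.inl (sub_pos.2 (hs.2.trans_lt hxb)).ne'
  have h_int : ∫ s in a..x, (b - s) ^ (-(p + 1)) = p⁻¹ * ((b - x) ^ (-p) - (b - a) ^ (-p)) := by
    rw [intervalIntegral.integral_comp_sub_left (fun y => y ^ (-(p + 1))), integral_rpow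
      (Or.inr ⟨by linarith, notMem_uIcc_of_lt (by linarith) (by linarith)⟩),
      show -(p + 1) + 1 = -p by ring]
    field_simp
    ring
  rw [setLIntegral_congr_fun measurableSet_Ioo fun s hs =>
      congrArg ENNReal.ofReal (rpow_neg (by linarith [hs.2]) _).symm,
    ← ofReal_integral_eq_lintegral_ofReal
      ((h_cont.integrableOn_Icc).mono_set Ioo_subset_Icc_self)
      ((ae_restrict_iff' measurableSet_Ioo).2 (.of_forall fun s hs =>
        rpow_nonneg (by linarith [hs.2]) _)),
    ← integral_Ioc_eq_integral_Ioo, ← intervalIntegral.integral_of_le hax, h_int]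
  gcongr
  linarith [rpow_nonneg (by linarith : 0 ≤ b - a) (-p)]

theorem lintegral_Ioo_rpow_sub {s b p : ℝ} (hp : 0 < p) (hsb : s ≤ b) :
    ∫⁻ x in Ioo s b, ENNReal.ofReal ((b - x) ^ (p - 1)) = ENNReal.ofReal (p⁻¹ * (b - s) ^ p) := by
  have h_ii : IntervalIntegrable (fun x => (b - x) ^ (p - 1)) volume s b := by
    simpa using ((intervalIntegral.intervalIntegrable_rpow' (by linarith : -1 < p - 1)
      (a := 0) (b := b - s)).comp_sub_left b).symm
  have h_int : ∫ x in s..b, (b - x) ^ (p - 1) = p⁻¹ * (b - s) ^ p := by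
    rw [intervalIntegral.integral_comp_sub_left (fun y => y ^ (p - 1)), integral_rpow
      (Or.inl (by linarith)), sub_self, sub_add_cancel, zero_rpow hp.ne', sub_zero]
    field_simp
  rw [← ofReal_integral_eq_lintegral_ofReal
      ((intervalIntegrable_iff_integrableOn_Ioo_of_le hsb).1 h_ii)
      ((ae_restrict_iff' measurableSet_Ioo).2 (.of_forall fun x hx =>
        rpow_nonneg (by linarith [hx.2]) _)),
    ← integral_Ioc_eq_integral_Ioo, ← intervalIntegral.integral_of_le hsb, h_int]

theorem lintegral_Ioo_mul_lintegral_Ioo_swap {μ : Measure ℝ} [SFinite μ] {F G : ℝ → ℝ≥0∞}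
    (hF : Measurable F) (hG : Measurable G) (a b : ℝ) :
    ∫⁻ x in Ioo a b, F x * ∫⁻ s in Ioo a x, G s ∂μ ∂μ =
      ∫⁻ s in Ioo a b, (∫⁻ x in Ioo s b, F x ∂μ) * G s ∂μ := by
  let K : ℝ → ℝ → ℝ≥0∞ := fun x s =>
    {q : ℝ × ℝ | q.2 < q.1}.indicator (fun q => F q.1 * G q.2) (x, s)
  have hK : Measurable (Function.uncurry K) :=
    ((hF.comp measurable_fst).mul (hG.comp measurable_snd)).indicator
      (measurableSet_lt measurable_snd measurable_fst)
  have h_left : ∀ x ∈ Ioo a b, F x * ∫⁻ s in Ioo a x, G s ∂μ = ∫⁻ s in Ioo a b, K x s ∂μ := by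
    intro x hx
    have : K x = (Iio x).indicator fun s => F x * G s := rfl
    rw [this, lintegral_indicator measurableSet_Iio, Measure.restrict_restrict measurableSet_Iio,
      Iio_inter_Ioo, min_eq_left hx.2.le, lintegral_const_mul _ hG]
  have h_right : ∀ s ∈ Ioo a b, ∫⁻ x in Ioo a b, K x s ∂μ = (∫⁻ x in Ioo s b, F x ∂μ) * G s := by
    intro s hs
    have : (fun x => K x s) = (Ioi s).indicator fun x => F x * G s := rfl
    rw [this, lintegral_indicator measurableSet_Ioi, Measure.restrict_restrict measurableSet_Ioi,
      Ioi_inter_Ioo, max_eq_left hs.1.le, lintegral_mul_const _ hF]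
  rw [setLIntegral_congr_fun measurableSet_Ioo h_left, lintegral_lintegral_swap hK.aemeasurable,
    setLIntegral_congr_fun measurableSet_Ioo h_right]

theorem ofReal_sq_le_lintegral_rpow_sub_mul_deriv_sq {w : ℝ → ℝ} {a b x p : ℝ} (hp : 0 < p)
    (hax : a ≤ x) (hxb : x < b) (hw0 : w a = 0) (hc : ContinuousOn w (Icc a x))
    (hd : DifferentiableOn ℝ w (Ioo a x)) :
    ENNReal.ofReal (w x ^ 2) ≤ ENNReal.ofReal (p⁻¹ * (b - x) ^ (-p)) *
      ∫⁻ s in Ioo a x, ENNReal.ofReal ((b - s) ^ (p + 1) * deriv w s ^ 2) := by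
  have h_weight_pos : ∀ᵐ s ∂volume.restrict (Ioo a x), 0 < (b - s) ^ (p + 1) :=
    (ae_restrict_iff' measurableSet_Ioo).2 (.of_forall fun s hs =>
      rpow_pos_of_pos (by linarith [hs.2]) _)
  calc ENNReal.ofReal (w x ^ 2) = ‖w x - w a‖ₑ ^ 2 := by
        rw [hw0, sub_zero, ← enorm_pow, enorm_eq_ofReal_abs, abs_sq]
    _ ≤ (∫⁻ s in Ioo a x, ‖deriv w s‖ₑ) ^ 2 :=
        pow_le_pow_left₀ zero_le (enorm_sub_le_lintegral_enorm_deriv hax hc hd) 2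
    _ ≤ (∫⁻ s in Ioo a x, ENNReal.ofReal ((b - s) ^ (p + 1))⁻¹) *
          ∫⁻ s in Ioo a x, ENNReal.ofReal ((b - s) ^ (p + 1) * deriv w s ^ 2) :=
        sq_lintegral_enorm_le_lintegral_inv_mul_lintegral_mul_sq (measurable_deriv w)
          (by fun_prop) h_weight_pos
    _ ≤ _ := by gcongr; exact lintegral_Ioo_inv_rpow_sub_le hp hax hxb

theorem ofReal_rpow_sub_mul_sq_le_rpow_mul_lintegral {w : ℝ → ℝ} {a b x p : ℝ} (hp : 0 < p)
    (hax : a ≤ x) (hxb : x < b) (hw0 : w a = 0) (hc : ContinuousOn w (Icc a x))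
    (hd : DifferentiableOn ℝ w (Ioo a x)) :
    ENNReal.ofReal ((b - x) ^ (2 * p - 1) * w x ^ 2) ≤ ENNReal.ofReal p⁻¹ *
      (ENNReal.ofReal ((b - x) ^ (p - 1)) *
        ∫⁻ s in Ioo a x, ENNReal.ofReal ((b - s) ^ (p + 1) * deriv w s ^ 2)) := by
  have hbx : 0 < b - x := by linarith
  have h_exp : (b - x) ^ (2 * p - 1) * (p⁻¹ * (b - x) ^ (-p)) = p⁻¹ * (b - x) ^ (p - 1) := by
    rw [mul_left_comm, ← rpow_add hbx]
    ring_nf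
  calc ENNReal.ofReal ((b - x) ^ (2 * p - 1) * w x ^ 2)
      = ENNReal.ofReal ((b - x) ^ (2 * p - 1)) * ENNReal.ofReal (w x ^ 2) :=
        ENNReal.ofReal_mul (rpow_nonneg hbx.le _)
    _ ≤ ENNReal.ofReal ((b - x) ^ (2 * p - 1)) * (ENNReal.ofReal (p⁻¹ * (b - x) ^ (-p)) *
          ∫⁻ s in Ioo a x, ENNReal.ofReal ((b - s) ^ (p + 1) * deriv w s ^ 2)) := by
        gcongr
        exact ofReal_sq_le_lintegral_rpow_sub_mul_deriv_sq hp hax hxb hw0 hc hd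
    _ = _ := by
        rw [← mul_assoc, ← ENNReal.ofReal_mul (rpow_nonneg hbx.le _), h_exp,
          ENNReal.ofReal_mul (by positivity), mul_assoc]

theorem lintegral_rpow_sub_mul_sq_le {w : ℝ → ℝ} {a b α : ℝ} (hα : -1 < α) (hw0 : w a = 0)
    (hc : ContinuousOn w (Ico a b)) (hd : DifferentiableOn ℝ w (Ioo a b)) :
    ∫⁻ x in Ioo a b, ENNReal.ofReal ((b - x) ^ α * w x ^ 2) ≤
      ENNReal.ofReal (4 / (α + 1) ^ 2) *
        ∫⁻ x in Ioo a b, ENNReal.ofReal ((b - x) ^ (α + 2) * deriv w x ^ 2) := by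
  obtain ⟨p, hp, rfl⟩ : ∃ p, 0 < p ∧ α = 2 * p - 1 := ⟨(α + 1) / 2, by linarith, by ring⟩
  set G : ℝ → ℝ≥0∞ := fun s => ENNReal.ofReal ((b - s) ^ (p + 1) * deriv w s ^ 2)
  have hG : Measurable G := by
    have := measurable_deriv w
    fun_prop
  have h_tail : ∀ s ∈ Ioo a b, (∫⁻ x in Ioo s b, ENNReal.ofReal ((b - x) ^ (p - 1))) * G s =
      ENNReal.ofReal p⁻¹ * ENNReal.ofReal ((b - s) ^ (2 * p - 1 + 2) * deriv w s ^ 2) := by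
    intro s hs
    have hbs : 0 < b - s := by linarith [hs.2]
    rw [lintegral_Ioo_rpow_sub hp hs.2.le, ← ENNReal.ofReal_mul (by positivity),
      ← ENNReal.ofReal_mul (by positivity), mul_assoc, ← mul_assoc ((b - s) ^ p),
      ← rpow_add hbs]
    ring_nf
  calc ∫⁻ x in Ioo a b, ENNReal.ofReal ((b - x) ^ (2 * p - 1) * w x ^ 2)
      ≤ ∫⁻ x in Ioo a b,
          ENNReal.ofReal p⁻¹ * (ENNReal.ofReal ((b - x) ^ (p - 1)) * ∫⁻ s in Ioo a x, G s) :=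
        setLIntegral_mono' measurableSet_Ioo fun x hx =>
          ofReal_rpow_sub_mul_sq_le_rpow_mul_lintegral hp hx.1.le hx.2 hw0
            (hc.mono fun s hs => ⟨hs.1, hs.2.trans_lt hx.2⟩)
            (hd.mono (Ioo_subset_Ioo_right hx.2.le))
    _ = ENNReal.ofReal p⁻¹ * ∫⁻ s in Ioo a b,
          (∫⁻ x in Ioo s b, ENNReal.ofReal ((b - x) ^ (p - 1))) * G s := by
        rw [lintegral_const_mul' _ _ ENNReal.ofReal_ne_top,
          lintegral_Ioo_mul_lintegral_Ioo_swap (by fun_prop) hG]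
    _ = ENNReal.ofReal p⁻¹ * ENNReal.ofReal p⁻¹ *
          ∫⁻ x in Ioo a b, ENNReal.ofReal ((b - x) ^ (2 * p - 1 + 2) * deriv w x ^ 2) := by
        rw [setLIntegral_congr_fun measurableSet_Ioo h_tail,
          lintegral_const_mul' _ _ ENNReal.ofReal_ne_top, mul_assoc]
    _ = _ := by
        rw [← ENNReal.ofReal_mul (by positivity)]
        congr 2
        field_simp
        ring

theorem integral_rpow_sub_mul_sq_le {w : ℝ → ℝ} {a b α : ℝ} (hα : -1 < α) (hw0 : w a = 0)
    (hc : ContinuousOn w (Ico a b)) (hd : DifferentiableOn ℝ w (Ioo a b))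
    (hi : IntegrableOn (fun x => (b - x) ^ (α + 2) * deriv w x ^ 2) (Ioo a b)) :
    ∫ x in Ioo a b, (b - x) ^ α * w x ^ 2 ≤
      4 / (α + 1) ^ 2 * ∫ x in Ioo a b, (b - x) ^ (α + 2) * deriv w x ^ 2 := by
  have h_nonneg : ∀ (e : ℝ) (f : ℝ → ℝ),
      0 ≤ᵐ[volume.restrict (Ioo a b)] fun x => (b - x) ^ e * f x ^ 2 := fun e f =>
    (ae_restrict_iff' measurableSet_Ioo).2 (.of_forall fun x hx =>
      mul_nonneg (rpow_nonneg (by linarith [hx.2]) _) (sq_nonneg _))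
  have h_meas : AEStronglyMeasurable (fun x => (b - x) ^ α * w x ^ 2) (volume.restrict (Ioo a b)) :=
    ContinuousOn.aestronglyMeasurable (((continuousOn_const.sub continuousOn_id).rpow_const
      fun x hx => Or.inl (sub_pos.2 hx.2).ne').mul
      ((hc.mono Ioo_subset_Ico_self).pow 2)) measurableSet_Ioo
  rw [integral_eq_lintegral_of_nonneg_ae (h_nonneg α w) h_meas]
  refine ENNReal.toReal_le_of_le_ofReal
    (mul_nonneg (by positivity) (integral_nonneg_of_ae (h_nonneg _ _))) ?_
  rw [ENNReal.ofReal_mul (by positivity), ofReal_integral_eq_lintegral_ofReal hi (h_nonneg _ _)]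
  exact lintegral_rpow_sub_mul_sq_le hα hw0 hc hd

theorem refined_hardy_inequality (γ β : ℝ) (hγ : 1 < γ) (hβ : -(γ - 1) < β)
    (ρ : ℝ → ℝ)
    (hρ : ∀ x, ρ x = ((γ - 1) / γ * (1 - x)) ^ (1 / (γ - 1))) :
    ∃ C₂ : ℝ, 0 < C₂ ∧
      ∀ w : ℝ → ℝ, w 0 = 0 →
        ContinuousOn w (Set.Ico 0 1) →
        DifferentiableOn ℝ w (Set.Ioo 0 1) →
        IntegrableOn
          (fun x => ρ x ^ (β + 2 * (γ - 1)) * (deriv w x) ^ 2) (Set.Ioo 0 1) →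
        ∫ x in Set.Ioo (0 : ℝ) 1, ρ x ^ β * (w x) ^ 2 ≤
          C₂ * ∫ x in Set.Ioo (0 : ℝ) 1,
            ρ x ^ (β + 2 * (γ - 1)) * (deriv w x) ^ 2 := by
  set c := (γ - 1) / γ
  have hc : 0 < c := div_pos (by linarith) (by linarith)
  set α := β / (γ - 1)
  have hα : -1 < α := by rw [lt_div_iff₀ (by linarith)]; linarith
  have hα1 : 0 < α + 1 := by linarith
  have h_exp : (β + 2 * (γ - 1)) / (γ - 1) = α + 2 := by
    rw [add_div, mul_div_cancel_right₀ _ (by linarith)]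
  have h_scale : ∀ (e : ℝ) (f : ℝ → ℝ), EqOn (fun x => ρ x ^ e * f x)
      (fun x => c ^ (e / (γ - 1)) * ((1 - x) ^ (e / (γ - 1)) * f x)) (Ioo 0 1) := by
    intro e f x hx
    dsimp only
    rw [hρ, ← rpow_mul (by have := hx.2; positivity), one_div_mul_eq_div,
      mul_rpow hc.le (by linarith [hx.2]), mul_assoc]
  refine ⟨4 / ((α + 1) ^ 2 * c ^ 2), by positivity, fun w hw0 hwc hwd hwi => ?_⟩
  have hi := (integrable_const_mul_iff (rpow_pos_of_pos hc _).ne'.isUnit _).1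
    ((integrableOn_congr_fun (h_scale _ _) measurableSet_Ioo).1 hwi)
  rw [h_exp] at hi
  rw [setIntegral_congr_fun measurableSet_Ioo (h_scale _ _), integral_const_mul,
    setIntegral_congr_fun measurableSet_Ioo (h_scale _ _), integral_const_mul, h_exp,
    rpow_add hc, rpow_two]
  calc c ^ α * ∫ x in Ioo 0 1, (1 - x) ^ α * w x ^ 2
      ≤ c ^ α * (4 / (α + 1) ^ 2 * ∫ x in Ioo 0 1, (1 - x) ^ (α + 2) * deriv w x ^ 2) := by
        gcongr
        exact integral_rpow_sub_mul_sq_le hα hw0 hwc hwd hi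
    _ = _ := by field_simp
end

section
/- Let ρ̄ be continuous on [0,1] with ρ̄(x) > 0 for x ∈ [0,1) and ρ̄(1) = 0. Then for every ε > 0 there exists C(ε) > 0 such that for all u ∈ H¹((0,1)): ∫₀¹ u² dx ≤ ε ∫₀¹ u_x² dx + C(ε) ∫₀¹ ρ̄ u² dx. -/
/-!
Away from `x = 1` the weight is bounded below by some `m > 0`, so the mass of `u ^ 2` on
`(0, 1 - δ)` is at most `m⁻¹ ∫ ρ u ^ 2`. On the boundary layer `[1 - δ, 1)` compare `u` with
its value at a point `y ∈ [1 - 2δ, 1 - δ]` where `u ^ 2` is minimal: `δ u(y) ^ 2` is bounded by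
the mass on the neighbouring layer, and by the fundamental theorem of calculus and
Cauchy–Schwarz `(u x - u y) ^ 2 ≤ 2δ ∫ u' ^ 2`. This bounds the layer's mass by twice the
interior mass plus `4δ ^ 2 ∫ u' ^ 2`, and `δ` is chosen with `4δ ^ 2 ≤ ε`.
-/

open Real MeasureTheory Set

theorem sq_integral_le_measureReal_mul_integral_sq {α : Type*} [MeasurableSpace α]
    {μ : Measure α} [IsFiniteMeasure μ] {f : α → ℝ} (hf : MemLp f 2 μ) :
    (∫ x, f x ∂μ) ^ 2 ≤ μ.real univ * ∫ x, f x ^ 2 ∂μ := by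
  have holder := integral_mul_le_Lp_mul_Lq_of_nonneg (μ := μ) Real.HolderConjugate.two_two
    (f := fun _ => (1 : ℝ)) (g := fun x => |f x|) (.of_forall fun _ => zero_le_one)
    (.of_forall fun _ => abs_nonneg _) (by simpa using memLp_const (1 : ℝ))
    (by rw [ENNReal.ofReal_ofNat]; exact hf.abs)
  simp only [one_mul, rpow_two, one_pow, sq_abs, integral_const, smul_eq_mul, mul_one,
    ← sqrt_eq_rpow] at holder
  calc (∫ x, f x ∂μ) ^ 2 = |∫ x, f x ∂μ| ^ 2 := (sq_abs _).symm
    _ ≤ (∫ x, |f x| ∂μ) ^ 2 :=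
      pow_le_pow_left₀ (abs_nonneg _) abs_integral_le_integral_abs 2
    _ ≤ (√(μ.real univ) * √(∫ x, f x ^ 2 ∂μ)) ^ 2 :=
      pow_le_pow_left₀ (integral_nonneg fun _ => abs_nonneg _) holder 2
    _ = μ.real univ * ∫ x, f x ^ 2 ∂μ := by
      rw [mul_pow, sq_sqrt measureReal_nonneg, sq_sqrt (integral_nonneg fun _ => sq_nonneg _)]

section Interval

variable {u : ℝ → ℝ} {a b c : ℝ}

theorem sq_sub_le_mul_setIntegral_deriv_sq (hab : a ≤ b) (hu : ContinuousOn u (Icc a b))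
    (hud : DifferentiableOn ℝ u (Ioo a b))
    (hu' : IntegrableOn (fun x => deriv u x ^ 2) (Ioo a b)) :
    (u b - u a) ^ 2 ≤ (b - a) * ∫ x in Ioo a b, deriv u x ^ 2 := by
  have hmem : MemLp (deriv u) 2 (volume.restrict (Ioo a b)) :=
    (memLp_two_iff_integrable_sq (measurable_deriv u).aestronglyMeasurable).2 hu'
  have hftc : ∫ x in Ioo a b, deriv u x = u b - u a := by
    rw [← integral_Ioc_eq_integral_Ioo, ← intervalIntegral.integral_of_le hab]
    refine intervalIntegral.integral_eq_sub_of_hasDerivAt_of_le hab hu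
      (fun x hx => (hud.differentiableAt (Ioo_mem_nhds hx.1 hx.2)).hasDerivAt) ?_
    exact (intervalIntegrable_iff_integrableOn_Ioo_of_le hab).2 (hmem.integrable one_le_two)
  have hvol : (volume.restrict (Ioo a b)).real univ = b - a := by
    simp [hab]
  simpa [← hftc, hvol] using sq_integral_le_measureReal_mul_integral_sq hmem

theorem exists_mul_le_setIntegral_Ioo {f : ℝ → ℝ} (hab : a ≤ b)
    (hf : ContinuousOn f (Icc a b)) :
    ∃ y ∈ Icc a b, (b - a) * f y ≤ ∫ x in Ioo a b, f x := by
  obtain ⟨y, hy, hmin⟩ := isCompact_Icc.exists_isMinOn (nonempty_Icc.2 hab) hf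
  refine ⟨y, hy, ?_⟩
  calc (b - a) * f y = ∫ _ in Ioo a b, f y := by simp [hab]
    _ ≤ ∫ x in Ioo a b, f x :=
      setIntegral_mono_on (integrableOn_const measure_Ioo_lt_top.ne)
        (hf.integrableOn_Icc.mono_set Ioo_subset_Icc_self) measurableSet_Ioo
        fun x hx => hmin (Ioo_subset_Icc_self hx)

theorem mul_setIntegral_Ico_sq_le (hab : a ≤ b) (hbc : b ≤ c) (hu : ContinuousOn u (Icc a c))
    (hud : DifferentiableOn ℝ u (Ioo a c))
    (hu' : IntegrableOn (fun x => deriv u x ^ 2) (Ioo a c)) :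
    (b - a) * ∫ x in Ico b c, u x ^ 2 ≤
      (c - b) * (2 * (∫ x in Ioo a b, u x ^ 2) +
        2 * (b - a) * (c - a) * ∫ x in Ioo a c, deriv u x ^ 2) := by
  set E := ∫ x in Ioo a c, deriv u x ^ 2
  obtain ⟨y, hy, hyu⟩ := exists_mul_le_setIntegral_Ioo (f := fun x => u x ^ 2) hab
    ((hu.mono (Icc_subset_Icc le_rfl hbc)).pow 2)
  have hpoint : ∀ x ∈ Ico b c, u x ^ 2 ≤ 2 * u y ^ 2 + 2 * (c - a) * E := by
    intro x hx
    have hyx : y ≤ x := hy.2.trans hx.1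
    have hdiff := sq_sub_le_mul_setIntegral_deriv_sq hyx (hu.mono (Icc_subset_Icc hy.1 hx.2.le))
      (hud.mono (Ioo_subset_Ioo hy.1 hx.2.le)) (hu'.mono_set (Ioo_subset_Ioo hy.1 hx.2.le))
    have hloc0 : 0 ≤ ∫ t in Ioo y x, deriv u t ^ 2 :=
      setIntegral_nonneg measurableSet_Ioo fun _ _ => sq_nonneg _
    have hloc : (x - y) * ∫ t in Ioo y x, deriv u t ^ 2 ≤ (c - a) * E :=
      mul_le_mul (by linarith [hx.2, hy.1]) (setIntegral_mono_set hu'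
        (.of_forall fun _ => sq_nonneg _) (.of_forall (Ioo_subset_Ioo hy.1 hx.2.le))) hloc0
        (by linarith [hx.2, hy.1])
    nlinarith [sq_nonneg (u x - 2 * u y)]
  have hlayer : ∫ x in Ico b c, u x ^ 2 ≤ (c - b) * (2 * u y ^ 2 + 2 * (c - a) * E) :=
    calc ∫ x in Ico b c, u x ^ 2 ≤ ∫ _ in Ico b c, (2 * u y ^ 2 + 2 * (c - a) * E) :=
          setIntegral_mono_on ((hu.pow 2).integrableOn_Icc.mono_set (Ico_subset_Icc_self.trans
            (Icc_subset_Icc hab le_rfl))) (integrableOn_const measure_Ico_lt_top.ne)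
            measurableSet_Ico hpoint
      _ = (c - b) * (2 * u y ^ 2 + 2 * (c - a) * E) := by simp [hbc]
  linear_combination mul_le_mul_of_nonneg_left hlayer (sub_nonneg.2 hab) +
    2 * mul_le_mul_of_nonneg_left hyu (sub_nonneg.2 hbc)

theorem setIntegral_sq_le_three_mul_add_mul_setIntegral_deriv_sq {δ : ℝ} (hδ : 0 < δ)
    (hδac : 2 * δ ≤ c - a) (hu : ContinuousOn u (Icc a c))
    (hud : DifferentiableOn ℝ u (Ioo a c))
    (hu' : IntegrableOn (fun x => deriv u x ^ 2) (Ioo a c)) :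
    ∫ x in Ioo a c, u x ^ 2 ≤
      3 * (∫ x in Ioo a (c - δ), u x ^ 2) + 4 * δ ^ 2 * ∫ x in Ioo a c, deriv u x ^ 2 := by
  have hu2 : IntegrableOn (fun x => u x ^ 2) (Icc a c) := (hu.pow 2).integrableOn_Icc
  have hlayer := mul_setIntegral_Ico_sq_le (a := c - 2 * δ) (b := c - δ) (c := c) (by linarith)
    (by linarith) (hu.mono (Icc_subset_Icc (by linarith) le_rfl))
    (hud.mono (Ioo_subset_Ioo (by linarith) le_rfl))
    (hu'.mono_set (Ioo_subset_Ioo (by linarith) le_rfl))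
  have hmass : ∫ x in Ioo (c - 2 * δ) (c - δ), u x ^ 2 ≤ ∫ x in Ioo a (c - δ), u x ^ 2 :=
    setIntegral_mono_set
      (hu2.mono_set (Ioo_subset_Icc_self.trans (Icc_subset_Icc le_rfl (by linarith))))
      (.of_forall fun _ => sq_nonneg _) (.of_forall (Ioo_subset_Ioo (by linarith) le_rfl))
  have henergy : ∫ x in Ioo (c - 2 * δ) c, deriv u x ^ 2 ≤ ∫ x in Ioo a c, deriv u x ^ 2 :=
    setIntegral_mono_set hu' (.of_forall fun _ => sq_nonneg _)
      (.of_forall (Ioo_subset_Ioo (by linarith) le_rfl))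
  have htail : ∫ x in Ico (c - δ) c, u x ^ 2 ≤
      2 * (∫ x in Ioo a (c - δ), u x ^ 2) + 4 * δ ^ 2 * ∫ x in Ioo a c, deriv u x ^ 2 := by
    refine le_of_mul_le_mul_left ?_ hδ
    calc δ * ∫ x in Ico (c - δ) c, u x ^ 2
        = (c - δ - (c - 2 * δ)) * ∫ x in Ico (c - δ) c, u x ^ 2 := by ring
      _ ≤ _ := hlayer
      _ ≤ _ := by
        linear_combination mul_le_mul_of_nonneg_left hmass (by positivity : 0 ≤ 2 * δ) +
          mul_le_mul_of_nonneg_left henergy (by positivity : 0 ≤ 4 * δ ^ 3)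
  have hsplit : ∫ x in Ioo a c, u x ^ 2 =
      (∫ x in Ioo a (c - δ), u x ^ 2) + ∫ x in Ico (c - δ) c, u x ^ 2 := by
    rw [← setIntegral_union ((Iio_disjoint_Ici le_rfl).mono Ioo_subset_Iio_self
      Ico_subset_Ici_self) measurableSet_Ico
      (hu2.mono_set (Ioo_subset_Icc_self.trans (Icc_subset_Icc le_rfl (by linarith))))
      (hu2.mono_set (Ico_subset_Icc_self.trans (Icc_subset_Icc (by linarith) le_rfl))),
      Ioo_union_Ico_eq_Ioo (by linarith) (by linarith)]
  linarith

end Interval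

theorem exists_pos_mul_setIntegral_le_setIntegral_weight_mul {ρ : ℝ → ℝ} {b : ℝ}
    (hρc : ContinuousOn ρ (Icc 0 1)) (hρpos : ∀ x ∈ Ico (0 : ℝ) 1, 0 < ρ x) (hb : b < 1) :
    ∃ m > 0, ∀ g : ℝ → ℝ, ContinuousOn g (Icc 0 1) → (∀ x ∈ Ioo 0 1, 0 ≤ g x) →
      m * ∫ x in Ioo 0 b, g x ≤ ∫ x in Ioo 0 1, ρ x * g x := by
  obtain ⟨m, hm, hρm⟩ := isCompact_Icc.exists_forall_le'
    (hρc.mono (Icc_subset_Icc le_rfl hb.le)) fun x hx => hρpos x ⟨hx.1, hx.2.trans_lt hb⟩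
  refine ⟨m, hm, fun g hg hg0 => ?_⟩
  have hsub : Ioo 0 b ⊆ Ioo (0 : ℝ) 1 := Ioo_subset_Ioo le_rfl hb.le
  have hρg : IntegrableOn (fun x => ρ x * g x) (Ioo 0 1) :=
    (hρc.mul hg).integrableOn_Icc.mono_set Ioo_subset_Icc_self
  calc m * ∫ x in Ioo 0 b, g x = ∫ x in Ioo 0 b, m * g x := (integral_const_mul m _).symm
    _ ≤ ∫ x in Ioo 0 b, ρ x * g x :=
      setIntegral_mono_on
        ((hg.integrableOn_Icc.mono_set (hsub.trans Ioo_subset_Icc_self)).const_mul m)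
        (hρg.mono_set hsub) measurableSet_Ioo fun x hx =>
          mul_le_mul_of_nonneg_right (hρm x (Ioo_subset_Icc_self hx)) (hg0 x (hsub hx))
    _ ≤ ∫ x in Ioo 0 1, ρ x * g x :=
      setIntegral_mono_set hρg ((ae_restrict_iff' measurableSet_Ioo).2 (.of_forall fun x hx =>
        mul_nonneg (hρpos x (Ioo_subset_Ico_self hx)).le (hg0 x hx))) (.of_forall hsub)

theorem weighted_interpolation_inequality_general (ρ : ℝ → ℝ)
    (hρc : ContinuousOn ρ (Set.Icc 0 1))
    (hρpos : ∀ x ∈ Set.Ico (0 : ℝ) 1, 0 < ρ x) :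
    ∀ ε : ℝ, 0 < ε → ∃ C : ℝ, 0 < C ∧
      ∀ u : ℝ → ℝ, ContinuousOn u (Set.Icc 0 1) →
        DifferentiableOn ℝ u (Set.Ioo 0 1) →
        IntegrableOn (fun x => (deriv u x) ^ 2) (Set.Ioo 0 1) →
        ∫ x in Set.Ioo (0 : ℝ) 1, (u x) ^ 2 ≤
          ε * ∫ x in Set.Ioo (0 : ℝ) 1, (deriv u x) ^ 2 +
          C * ∫ x in Set.Ioo (0 : ℝ) 1, ρ x * (u x) ^ 2 := by
  intro ε hε
  obtain ⟨δ, hδ, hδ1, hδε⟩ : ∃ δ : ℝ, 0 < δ ∧ 2 * δ ≤ 1 ∧ 4 * δ ^ 2 ≤ ε :=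
    ⟨min (1 / 2) (ε / 2), by positivity, by linarith [min_le_left (1 / 2) (ε / 2)], by
      nlinarith [min_le_left (1 / 2) (ε / 2), min_le_right (1 / 2) (ε / 2),
        lt_min (one_half_pos : (0 : ℝ) < 1 / 2) (half_pos hε)]⟩
  obtain ⟨m, hm, hweight⟩ :=
    exists_pos_mul_setIntegral_le_setIntegral_weight_mul hρc hρpos (by linarith : 1 - δ < 1)
  refine ⟨3 / (m * ε), by positivity, fun u hu hud hu' => ?_⟩
  have hlayer := setIntegral_sq_le_three_mul_add_mul_setIntegral_deriv_sq hδ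
    (by linarith) hu hud hu'
  have hinterior := hweight (fun x => u x ^ 2) (hu.pow 2) fun _ _ => sq_nonneg _
  set E := ∫ x in Ioo (0 : ℝ) 1, deriv u x ^ 2
  set W := ∫ x in Ioo (0 : ℝ) 1, ρ x * u x ^ 2
  have hE : 0 ≤ E := setIntegral_nonneg measurableSet_Ioo fun _ _ => sq_nonneg _
  -- `∫` binds the whole sum, so the right-hand side is `ε * ∫ (u' ^ 2 + C * W)`
  have hrhs :
      ∫ x in Ioo (0 : ℝ) 1, (deriv u x ^ 2 + 3 / (m * ε) * W) = E + 3 / (m * ε) * W := by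
    rw [integral_add hu' (integrableOn_const measure_Ioo_lt_top.ne)]
    simp [E]
  rw [hrhs]
  calc _ ≤ 3 * (W / m) + ε * E := by
        linarith [(le_div_iff₀' hm).2 hinterior, mul_le_mul_of_nonneg_right hδε hE]
    _ = ε * (E + 3 / (m * ε) * W) := by
        field_simp
        ring

theorem weighted_interpolation_inequality (ρ : ℝ → ℝ)
    (hρc : ContinuousOn ρ (Set.Icc 0 1))
    (hρpos : ∀ x ∈ Set.Ico (0 : ℝ) 1, 0 < ρ x)
    (hρ1 : ρ 1 = 0) :
    ∀ ε : ℝ, 0 < ε → ∃ C : ℝ, 0 < C ∧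
      ∀ u : ℝ → ℝ, ContinuousOn u (Set.Icc 0 1) →
        DifferentiableOn ℝ u (Set.Ioo 0 1) →
        IntegrableOn (fun x => (deriv u x) ^ 2) (Set.Ioo 0 1) →
        ∫ x in Set.Ioo (0 : ℝ) 1, (u x) ^ 2 ≤
          ε * ∫ x in Set.Ioo (0 : ℝ) 1, (deriv u x) ^ 2 +
          C * ∫ x in Set.Ioo (0 : ℝ) 1, ρ x * (u x) ^ 2 :=
  weighted_interpolation_inequality_general ρ hρc hρpos
end
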